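/- arXiv:math/0503274 — 2 statements merged into one kernel-verified Lean document; each statement's English description precedes it below -/
import Mathlib

section
/- Let α ≤ β be real numbers and define θ[α,β;t] := α for t ≤ α, θ[α,β;t] := t for α ≤ t ≤ β, and θ[α,β;t] := β for t ≥ β. Define θ'[α,β;t] := ∫_{-∞}^{∞} θ[α,β;r+t]·(e^{-|r|}/2) dr. Then for every real t, θ'[α,β;t] = θ[α,β;t] + (e^{-|t-α|} - e^{-|t-β|})/2; in particular |θ'[α,β;t] - θ[α,β;t]| ≤ 1. -/
/-!
Write `θ(s) = α + (s - α)⁺ - (s - β)⁺`, so that everything reduces to the integral `G d` of the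
ramp `(r - d)⁺` against the Laplace density `φ r = e^{-|r|}/2`. For `d ≥ 0` the ramp lives where
`φ r = e^{-r}/2` and `G d = e^{-d}/2`. For `d < 0`, the identity `(r - d)⁺ - (d - r)⁺ = r - d` and
the symmetry of `φ` give `G d - G (-d) = -d`. Hence `G d = d⁻ + e^{-|d|}/2`, and the two ramps of
`θ` produce the two exponential corrections.
-/

/-- The projection of ℝ onto the interval [α,β]. -/
noncomputable def thetaProj (α β t : ℝ) : ℝ := max α (min t β)

/-- The smooth-out of the projection: convolution with the density e^{-|r|}/2. -/
noncomputable def thetaProj' (α β t : ℝ) : ℝ :=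
  ∫ r : ℝ, thetaProj α β (r + t) * (Real.exp (-|r|) / 2)

open MeasureTheory Set Filter Real
open scoped Topology

section SubMulExpNeg

variable (a : ℝ)

theorem hasDerivAt_neg_sub_add_one_mul_exp_neg (x : ℝ) :
    HasDerivAt (fun x ↦ -(x - a + 1) * exp (-x)) ((x - a) * exp (-x)) x :=
  ((((hasDerivAt_id' x).sub_const a).add_const 1).fun_neg.fun_mul
    (hasDerivAt_neg' x).exp).congr_deriv (by ring)

theorem tendsto_neg_sub_add_one_mul_exp_neg_atTop :
    Tendsto (fun x ↦ -(x - a + 1) * exp (-x)) atTop (𝓝 0) := by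
  have h := (tendsto_pow_mul_exp_neg_atTop_nhds_zero 1).neg.add
    (tendsto_exp_neg_atTop_nhds_zero.const_mul (a - 1))
  simp only [pow_one, neg_zero, mul_zero, add_zero] at h
  exact h.congr fun x ↦ by ring

theorem sub_mul_exp_neg_nonneg {x : ℝ} (hx : x ∈ Ioi a) : 0 ≤ (x - a) * exp (-x) :=
  mul_nonneg (sub_nonneg.2 (le_of_lt hx)) (exp_pos _).le

theorem integrableOn_Ioi_sub_mul_exp_neg : IntegrableOn (fun x ↦ (x - a) * exp (-x)) (Ioi a) :=
  integrableOn_Ioi_deriv_of_nonneg' (fun x _ ↦ hasDerivAt_neg_sub_add_one_mul_exp_neg a x)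
    (fun _ ↦ sub_mul_exp_neg_nonneg a) (tendsto_neg_sub_add_one_mul_exp_neg_atTop a)

theorem integral_Ioi_sub_mul_exp_neg : ∫ x in Ioi a, (x - a) * exp (-x) = exp (-a) := by
  rw [integral_Ioi_of_hasDerivAt_of_nonneg' (fun x _ ↦ hasDerivAt_neg_sub_add_one_mul_exp_neg a x)
    (fun _ ↦ sub_mul_exp_neg_nonneg a) (tendsto_neg_sub_add_one_mul_exp_neg_atTop a)]
  ring

end SubMulExpNeg

noncomputable def laplaceDensity (r : ℝ) : ℝ := exp (-|r|) / 2

@[simp]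
theorem laplaceDensity_neg (r : ℝ) : laplaceDensity (-r) = laplaceDensity r := by
  simp [laplaceDensity]

theorem laplaceDensity_nonneg (r : ℝ) : 0 ≤ laplaceDensity r := by
  unfold laplaceDensity; positivity

@[fun_prop]
theorem continuous_laplaceDensity : Continuous laplaceDensity := by
  unfold laplaceDensity; fun_prop

theorem integrable_laplaceDensity : Integrable laplaceDensity := by
  rw [← integrableOn_univ, ← Iic_union_Ioi (a := 0), integrableOn_union]
  constructor
  · refine IntegrableOn.congr_fun ((integrableOn_exp_Iic 0).div_const 2) (fun r hr ↦ ?_)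
      measurableSet_Iic
    simp [laplaceDensity, abs_of_nonpos (mem_Iic.1 hr)]
  · refine IntegrableOn.congr_fun ((exp_neg_integrableOn_Ioi 0 one_pos).div_const 2)
      (fun r hr ↦ ?_) measurableSet_Ioi
    simp [laplaceDensity, abs_of_pos (mem_Ioi.1 hr)]

theorem integral_laplaceDensity : ∫ r, laplaceDensity r = 1 := by
  simp only [laplaceDensity]
  rw [integral_comp_abs (f := fun x ↦ exp (-x) / 2), integral_div, integral_exp_neg_Ioi_zero]
  norm_num

theorem ramp_mul_laplaceDensity_of_nonneg {d : ℝ} (hd : 0 ≤ d) :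
    (fun r ↦ max (r - d) 0 * laplaceDensity r) =
      (Ioi d).indicator fun r ↦ (r - d) * exp (-r) / 2 := by
  ext r
  by_cases hr : r ∈ Ioi d
  · rw [indicator_of_mem hr, laplaceDensity, max_eq_left (sub_nonneg.2 (le_of_lt hr)),
      abs_of_pos (hd.trans_lt hr)]
    ring
  · rw [indicator_of_notMem hr, max_eq_right (sub_nonpos.2 (not_lt.1 hr)), zero_mul]

theorem integrable_ramp_mul_laplaceDensity (d : ℝ) :
    Integrable fun r ↦ max (r - d) 0 * laplaceDensity r := by
  have h₀ : Integrable fun r ↦ max (r - 0) 0 * laplaceDensity r := by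
    rw [ramp_mul_laplaceDensity_of_nonneg le_rfl, integrable_indicator_iff measurableSet_Ioi]
    exact (integrableOn_Ioi_sub_mul_exp_neg 0).div_const 2
  refine (h₀.add (integrable_laplaceDensity.const_mul |d|)).mono' (by fun_prop)
    (Eventually.of_forall fun r ↦ ?_)
  have hramp : max (r - d) 0 ≤ max (r - 0) 0 + |d| :=
    max_le (by linarith [neg_abs_le d, le_max_left (r - 0) 0]) (by positivity)
  rw [Real.norm_of_nonneg (mul_nonneg (le_max_right _ _) (laplaceDensity_nonneg r))]
  simpa only [Pi.add_apply, add_mul] using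
    mul_le_mul_of_nonneg_right hramp (laplaceDensity_nonneg r)

theorem integral_ramp_mul_laplaceDensity_of_nonneg {d : ℝ} (hd : 0 ≤ d) :
    ∫ r, max (r - d) 0 * laplaceDensity r = exp (-d) / 2 := by
  rw [ramp_mul_laplaceDensity_of_nonneg hd, integral_indicator measurableSet_Ioi, integral_div,
    integral_Ioi_sub_mul_exp_neg d]

theorem integral_id_mul_laplaceDensity : ∫ r, r * laplaceDensity r = 0 := by
  have h := integral_neg_eq_self (fun r ↦ r * laplaceDensity r) volume
  simp only [laplaceDensity_neg, neg_mul, integral_neg] at h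
  linarith

theorem integral_ramp_mul_laplaceDensity_sub_neg (d : ℝ) :
    (∫ r, max (r - d) 0 * laplaceDensity r) - ∫ r, max (r - -d) 0 * laplaceDensity r = -d := by
  have hsymm : ∫ r, max (r - -d) 0 * laplaceDensity r = ∫ r, max (d - r) 0 * laplaceDensity r := by
    rw [← integral_neg_eq_self]
    simp only [laplaceDensity_neg, sub_neg_eq_add, neg_add_eq_sub]
  have hramp (r : ℝ) : max (r - d) 0 - max (d - r) 0 = r - d := by
    rcases le_total r d with h | h
    · rw [max_eq_right (by linarith), max_eq_left (by linarith)]; ring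
    · rw [max_eq_left (by linarith), max_eq_right (by linarith)]; ring
  have hint_ramp := integrable_ramp_mul_laplaceDensity d
  have hint_neg : Integrable fun r ↦ max (d - r) 0 * laplaceDensity r := by
    simpa only [sub_neg_eq_add, neg_add_eq_sub, laplaceDensity_neg] using
      (integrable_ramp_mul_laplaceDensity (-d)).comp_neg
  have hint_id : Integrable fun r ↦ r * laplaceDensity r := by
    refine ((hint_ramp.sub hint_neg).add (integrable_laplaceDensity.const_mul d)).congr
      (Eventually.of_forall fun r ↦ ?_)
    simp only [Pi.add_apply, Pi.sub_apply, ← sub_mul, hramp]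
    ring
  calc (∫ r, max (r - d) 0 * laplaceDensity r) - ∫ r, max (r - -d) 0 * laplaceDensity r
      = ∫ r, (max (r - d) 0 * laplaceDensity r - max (d - r) 0 * laplaceDensity r) := by
        rw [hsymm, integral_sub hint_ramp hint_neg]
    _ = ∫ r, (r * laplaceDensity r - d * laplaceDensity r) := by
        simp only [← sub_mul, hramp]
    _ = -d := by
        rw [integral_sub hint_id (integrable_laplaceDensity.const_mul d),
          integral_id_mul_laplaceDensity, integral_const_mul, integral_laplaceDensity]
        ring

theorem integral_ramp_mul_laplaceDensity (d : ℝ) :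
    ∫ r, max (r - d) 0 * laplaceDensity r = max (-d) 0 + exp (-|d|) / 2 := by
  rcases le_total 0 d with hd | hd
  · rw [integral_ramp_mul_laplaceDensity_of_nonneg hd, max_eq_right (by linarith),
      abs_of_nonneg hd, zero_add]
  · have h := integral_ramp_mul_laplaceDensity_sub_neg d
    rw [integral_ramp_mul_laplaceDensity_of_nonneg (neg_nonneg.2 hd)] at h
    rw [max_eq_left (by linarith), abs_of_nonpos hd]
    linarith

theorem thetaProj_eq_add_ramp_sub_ramp {α β : ℝ} (hab : α ≤ β) (s : ℝ) :
    thetaProj α β s = α + max (s - α) 0 - max (s - β) 0 := by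
  unfold thetaProj
  rcases le_total s α with h | h
  · rw [min_eq_left (h.trans hab), max_eq_left h, max_eq_right (by linarith),
      max_eq_right (by linarith)]
    ring
  rcases le_total s β with h' | h'
  · rw [min_eq_left h', max_eq_right h, max_eq_left (by linarith), max_eq_right (by linarith)]
    ring
  · rw [min_eq_right h', max_eq_right hab, max_eq_left (by linarith), max_eq_left (by linarith)]
    ring

theorem thetaProj'_eq_thetaProj_add {α β : ℝ} (hab : α ≤ β) (t : ℝ) :
    thetaProj' α β t = thetaProj α β t + (exp (-|t - α|) - exp (-|t - β|)) / 2 := by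
  have hsplit (r : ℝ) : thetaProj α β (r + t) * laplaceDensity r =
      α * laplaceDensity r + max (r - (α - t)) 0 * laplaceDensity r
        - max (r - (β - t)) 0 * laplaceDensity r := by
    rw [thetaProj_eq_add_ramp_sub_ramp hab, sub_sub_eq_add_sub, sub_sub_eq_add_sub]
    ring
  have hint_const : Integrable fun r ↦ α * laplaceDensity r :=
    integrable_laplaceDensity.const_mul α
  have hint_sum :
      Integrable fun r ↦ α * laplaceDensity r + max (r - (α - t)) 0 * laplaceDensity r :=
    hint_const.add (integrable_ramp_mul_laplaceDensity _)
  change ∫ r, thetaProj α β (r + t) * laplaceDensity r = _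
  simp only [hsplit]
  rw [integral_sub hint_sum (integrable_ramp_mul_laplaceDensity _),
    integral_add hint_const (integrable_ramp_mul_laplaceDensity _),
    integral_const_mul, integral_laplaceDensity, integral_ramp_mul_laplaceDensity,
    integral_ramp_mul_laplaceDensity, thetaProj_eq_add_ramp_sub_ramp hab, neg_sub, neg_sub,
    abs_sub_comm α, abs_sub_comm β]
  ring

theorem thetaProj'_eq (α β : ℝ) (hab : α ≤ β) (t : ℝ) :
    thetaProj' α β t =
      thetaProj α β t + (Real.exp (-|t - α|) - Real.exp (-|t - β|)) / 2 ∧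
    |thetaProj' α β t - thetaProj α β t| ≤ 1 := by
  have h := thetaProj'_eq_thetaProj_add hab t
  refine ⟨h, ?_⟩
  have hexp_le (x : ℝ) : exp (-|x|) ≤ 1 := exp_le_one_iff.2 (neg_nonpos.2 (abs_nonneg x))
  rw [h, add_sub_cancel_left, abs_div, abs_two]
  have := abs_sub_le_of_nonneg_of_le (exp_pos _).le (hexp_le (t - α)) (exp_pos _).le
    (hexp_le (t - β))
  linarith
end

section
/- Let α ≤ β be real numbers and θ'[α,β;t] := ∫_{-∞}^{∞} θ[α,β;r+t]·(e^{-|r|}/2) dr, where θ[α,β;·] is the projection of ℝ onto [α,β]. Then the derivative of θ'[α,β;·] at t equals (e^{t-α} - e^{t-β})/2 if t ≤ α, equals 1 - (e^{α-t} + e^{t-β})/2 if α ≤ t ≤ β, and equals (-e^{α-t} + e^{β-t})/2 if t ≥ β. -/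
/-! Off the two kinks the projection θ has derivative the indicator of `(α, β)`, and it is
1-Lipschitz, so one may differentiate under the integral sign (the kernel dominates the
difference quotients, and Rademacher's theorem makes `deriv θ` the a.e. derivative). Hence
the derivative of θ' at `t` is `∫_{α-t}^{β-t} e^{-|r|}/2 dr`, which is evaluated by splitting at `r = 0`. -/

open MeasureTheory Set Real
open scoped NNReal

theorem LipschitzWith.hasDerivAt_integral_comp_add_mul {g φ : ℝ → ℝ} {K : ℝ≥0}
    (hg : LipschitzWith K g) (hφ : Integrable φ) {t : ℝ}
    (hgφ : Integrable fun r => g (r + t) * φ r) :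
    HasDerivAt (fun s => ∫ r, g (r + s) * φ r) (∫ r, deriv g (r + t) * φ r) t := by
  have hqmp : Measure.QuasiMeasurePreserving (fun r : ℝ => r + t) :=
    (measurePreserving_add_right volume t).quasiMeasurePreserving
  refine (hasDerivAt_integral_of_dominated_loc_of_lip (bound := fun r => K * |φ r|)
    Filter.univ_mem ?meas hgφ ?meas' ?lip (hφ.abs.const_mul K) ?diff).2
  case meas =>
    exact .of_forall fun s =>
      (hg.continuous.comp (continuous_add_const s)).aestronglyMeasurable.mul hφ.1
  case meas' =>
    exact ((measurable_deriv g).comp_aemeasurable hqmp.aemeasurable).aestronglyMeasurable.mul hφ.1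
  case lip =>
    refine .of_forall fun r => (LipschitzWith.of_dist_le_mul fun x y => ?_).lipschitzOnWith
    have hgxy : |g (r + x) - g (r + y)| ≤ K * |x - y| := by
      simpa [Real.dist_eq] using hg.dist_le_mul (r + x) (r + y)
    rw [Real.dist_eq, Real.dist_eq, Real.coe_nnabs, ← sub_mul, abs_mul,
      abs_of_nonneg (by positivity : (0 : ℝ) ≤ K * |φ r|)]
    nlinarith [abs_nonneg (φ r)]
  case diff =>
    filter_upwards [hqmp.ae hg.ae_differentiableAt] with r hr
    exact (hr.hasDerivAt.comp t ((hasDerivAt_id t).const_add r)).mul_const (φ r) |>.congr_deriv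
      (by simp)

theorem integrable_exp_neg_abs : Integrable fun r : ℝ => exp (-|r|) := by
  have hneg : IntegrableOn (fun r : ℝ => exp (-|r|)) (Iic 0) :=
    (integrableOn_exp_Iic 0).congr_fun (fun r hr => by rw [abs_of_nonpos hr, neg_neg])
      measurableSet_Iic
  have hpos : IntegrableOn (fun r : ℝ => exp (-|r|)) (Ioi 0) :=
    (integrableOn_exp_neg_Ioi 0).congr_fun (fun r hr => by rw [abs_of_pos hr])
      measurableSet_Ioi
  rw [← integrableOn_univ, ← Iic_union_Ioi (a := (0 : ℝ))]
  exact hneg.union hpos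

theorem integral_exp_neg_abs_of_nonneg {a b : ℝ} (ha : 0 ≤ a) (hb : 0 ≤ b) :
    ∫ r in a..b, exp (-|r|) = exp (-a) - exp (-b) := by
  rw [intervalIntegral.integral_congr fun r hr => by
      rw [abs_of_nonneg (le_trans (le_min ha hb) hr.1)],
    intervalIntegral.integral_comp_neg (fun r => exp r), integral_exp]

theorem integral_exp_neg_abs_of_nonpos {a b : ℝ} (ha : a ≤ 0) (hb : b ≤ 0) :
    ∫ r in a..b, exp (-|r|) = exp b - exp a := by
  rw [intervalIntegral.integral_congr fun r hr => by
      rw [abs_of_nonpos (le_trans hr.2 (max_le ha hb)), neg_neg],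
    integral_exp]

theorem integral_exp_neg_abs_of_nonpos_of_nonneg {a b : ℝ} (ha : a ≤ 0) (hb : 0 ≤ b) :
    ∫ r in a..b, exp (-|r|) = 2 - exp a - exp (-b) := by
  have hint (c d : ℝ) : IntervalIntegrable (fun r => exp (-|r|)) volume c d :=
    (continuous_exp.comp continuous_abs.neg).intervalIntegrable c d
  rw [← intervalIntegral.integral_add_adjacent_intervals (hint a 0) (hint 0 b),
    integral_exp_neg_abs_of_nonpos ha le_rfl, integral_exp_neg_abs_of_nonneg le_rfl hb]
  simp only [neg_zero, exp_zero]
  ring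

theorem thetaProj_lipschitzWith (α β : ℝ) : LipschitzWith 1 (thetaProj α β) :=
  (LipschitzWith.id.min_const β).const_max α

theorem abs_thetaProj_le (α β x : ℝ) : |thetaProj α β x| ≤ max |α| |β| := by
  unfold thetaProj
  refine abs_le.mpr ⟨?_, ?_⟩
  · linarith [neg_abs_le α, le_max_left |α| |β|, le_max_left α (min x β)]
  · refine max_le (le_trans (le_abs_self α) (le_max_left _ _)) ?_
    exact (min_le_right x β).trans ((le_abs_self β).trans (le_max_right _ _))

theorem deriv_thetaProj_ae_eq (α β : ℝ) :
    deriv (thetaProj α β) =ᵐ[volume] (Ioo α β).indicator 1 := by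
  filter_upwards [volume.ae_ne α, volume.ae_ne β] with x hxα hxβ
  rcases hxα.lt_or_gt with hlt | hgt
  · rw [indicator_of_notMem (fun hx => hx.1.not_gt hlt)]
    have : thetaProj α β =ᶠ[nhds x] fun _ => α := by
      filter_upwards [eventually_lt_nhds hlt] with y hy
      exact max_eq_left ((min_le_left y β).trans hy.le)
    rw [this.deriv_eq, deriv_const]
  rcases hxβ.lt_or_gt with hlt' | hgt'
  · rw [indicator_of_mem (show x ∈ Ioo α β from ⟨hgt, hlt'⟩), Pi.one_apply]
    have : thetaProj α β =ᶠ[nhds x] id := by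
      filter_upwards [eventually_gt_nhds hgt, eventually_lt_nhds hlt'] with y hyα hyβ
      simp only [thetaProj, id, min_eq_left hyβ.le, max_eq_right hyα.le]
    rw [this.deriv_eq, deriv_id]
  · rw [indicator_of_notMem (fun hx => hx.2.not_gt hgt')]
    have : thetaProj α β =ᶠ[nhds x] fun _ => max α β := by
      filter_upwards [eventually_gt_nhds hgt'] with y hy
      rw [thetaProj, min_eq_right hy.le]
    rw [this.deriv_eq, deriv_const]

theorem integral_deriv_thetaProj_comp_add_mul (α β t : ℝ) {φ : ℝ → ℝ} :
    ∫ r, deriv (thetaProj α β) (r + t) * φ r = ∫ r in Ioo (α - t) (β - t), φ r := by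
  rw [← integral_indicator measurableSet_Ioo]
  refine integral_congr_ae ?_
  filter_upwards [(measurePreserving_add_right volume t).quasiMeasurePreserving.ae_eq_comp
    (deriv_thetaProj_ae_eq α β)] with r hr
  simp only [Function.comp_apply] at hr
  rw [hr]
  by_cases hmem : r ∈ Ioo (α - t) (β - t)
  · rw [indicator_of_mem hmem, indicator_of_mem, Pi.one_apply, one_mul]
    exact ⟨by linarith [hmem.1], by linarith [hmem.2]⟩
  · rw [indicator_of_notMem hmem, indicator_of_notMem, zero_mul]
    exact fun h => hmem ⟨by linarith [h.1], by linarith [h.2]⟩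

theorem hasDerivAt_thetaProj' {α β : ℝ} (hab : α ≤ β) (t : ℝ) :
    HasDerivAt (thetaProj' α β) ((∫ r in α - t..β - t, exp (-|r|)) / 2) t := by
  have hφ : Integrable fun r : ℝ => exp (-|r|) / 2 := integrable_exp_neg_abs.div_const 2
  have hbound : Integrable fun r => thetaProj α β (r + t) * (exp (-|r|) / 2) :=
    hφ.bdd_mul ((thetaProj_lipschitzWith α β).continuous.comp
      (continuous_add_const t)).aestronglyMeasurable (.of_forall fun r => abs_thetaProj_le α β _)
  have key := (thetaProj_lipschitzWith α β).hasDerivAt_integral_comp_add_mul hφ hbound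
  rwa [integral_deriv_thetaProj_comp_add_mul, integral_div, ← integral_Ioc_eq_integral_Ioo,
    ← intervalIntegral.integral_of_le (by linarith)] at key

theorem thetaProj'_deriv (α β : ℝ) (hab : α ≤ β) (t : ℝ) :
    (t ≤ α → HasDerivAt (thetaProj' α β)
      ((Real.exp (t - α) - Real.exp (t - β)) / 2) t) ∧
    (α ≤ t → t ≤ β → HasDerivAt (thetaProj' α β)
      (1 - (Real.exp (α - t) + Real.exp (t - β)) / 2) t) ∧
    (β ≤ t → HasDerivAt (thetaProj' α β)
      ((-Real.exp (α - t) + Real.exp (β - t)) / 2) t) := by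
  have key := hasDerivAt_thetaProj' hab t
  refine ⟨fun htα => ?_, fun hαt htβ => ?_, fun hβt => ?_⟩
  · rw [integral_exp_neg_abs_of_nonneg (by linarith) (by linarith), neg_sub, neg_sub] at key
    exact key
  · rw [integral_exp_neg_abs_of_nonpos_of_nonneg (by linarith) (by linarith), neg_sub] at key
    convert key using 1
    ring
  · rw [integral_exp_neg_abs_of_nonpos (by linarith) (by linarith)] at key
    convert key using 1
    ring
end
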